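/- arXiv:2108.09541 — 7 statements merged into one kernel-verified Lean document; each statement's English description precedes it below -/
import Mathlib

section
/- Let n ≥ 1 and let h : ℝⁿ → ℝ be continuous and integrable. Suppose that convolution with h commutes with all rotations on test functions: for every continuous compactly supported f : ℝⁿ → ℝ, every linear isometric equivalence Q of ℝⁿ, and every x ∈ ℝⁿ, ((f ∘ Q⁻¹) ⋆ h)(x) = (f ⋆ h)(Q⁻¹ x). Then h is radially symmetric: h(Q x) = h(x) for every linear isometric equivalence Q and every x ∈ ℝⁿ. -/
/-!
A continuous function is determined by its integrals against compactly supported test functions.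
Changing variables `y = Q u` in the left-hand side of the equivariance identity, which is
legitimate because rotations preserve Lebesgue measure, shows that the continuous functions
`u ↦ h (x - Q u)` and `u ↦ h (Q⁻¹ x - u)` have the same integral against every test function,
hence coincide; evaluating at `u = 0` with `x` replaced by `Q x` gives `h (Q x) = h x`.
-/

open MeasureTheory

open scoped ContDiff

theorem Continuous.eq_of_integral_contDiff_smul_eq
    {E F : Type*} [NormedAddCommGroup E] [NormedSpace ℝ E] [FiniteDimensional ℝ E]
    [MeasurableSpace E] [BorelSpace E] [NormedAddCommGroup F] [NormedSpace ℝ F] [CompleteSpace F]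
    {μ : Measure E} [IsLocallyFiniteMeasure μ] [μ.IsOpenPosMeasure] {f f' : E → F}
    (hf : Continuous f) (hf' : Continuous f')
    (h : ∀ g : E → ℝ, ContDiff ℝ ∞ g → HasCompactSupport g →
      ∫ x, g x • f x ∂μ = ∫ x, g x • f' x ∂μ) :
    f = f' :=
  (hf.ae_eq_iff_eq μ hf').mp <|
    ae_eq_of_integral_contDiff_smul_eq hf.locallyIntegrable hf'.locallyIntegrable h

theorem LinearIsometryEquiv.integral_comp
    {E E' F : Type*} [NormedAddCommGroup E] [InnerProductSpace ℝ E] [FiniteDimensional ℝ E]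
    [MeasurableSpace E] [BorelSpace E] [NormedAddCommGroup E'] [InnerProductSpace ℝ E']
    [FiniteDimensional ℝ E'] [MeasurableSpace E'] [BorelSpace E']
    [NormedAddCommGroup F] [NormedSpace ℝ F] (Q : E ≃ₗᵢ[ℝ] E') (g : E' → F) :
    ∫ x, g (Q x) = ∫ y, g y :=
  Q.measurePreserving.integral_comp Q.toHomeomorph.measurableEmbedding g

theorem radial_of_convolution_rotation_equivariant_general
    (n : ℕ)
    (h : EuclideanSpace ℝ (Fin n) → ℝ)
    (hcont : Continuous h)
    (hequiv : ∀ f : EuclideanSpace ℝ (Fin n) → ℝ, Continuous f → HasCompactSupport f →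
      ∀ (Q : EuclideanSpace ℝ (Fin n) ≃ₗᵢ[ℝ] EuclideanSpace ℝ (Fin n))
        (x : EuclideanSpace ℝ (Fin n)),
        ∫ y, f (Q.symm y) * h (x - y) = ∫ y, f y * h (Q.symm x - y)) :
    ∀ (Q : EuclideanSpace ℝ (Fin n) ≃ₗᵢ[ℝ] EuclideanSpace ℝ (Fin n))
      (x : EuclideanSpace ℝ (Fin n)), h (Q x) = h x := by
  intro Q x
  have hpullback : (fun u ↦ h (Q x - Q u)) = fun u ↦ h (Q.symm (Q x) - u) := by
    refine Continuous.eq_of_integral_contDiff_smul_eq (μ := volume) (by fun_prop) (by fun_prop)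
      fun f hf hf_supp ↦ ?_
    have hrotate := hequiv f hf.continuous hf_supp Q (Q x)
    rw [← Q.integral_comp] at hrotate
    simpa using hrotate
  simpa using congrFun hpullback 0

/-- Converse: if convolution with a continuous integrable kernel `h` commutes with all
rotations on continuous compactly supported test functions, then `h` is radially
symmetric. -/
theorem radial_of_convolution_rotation_equivariant
    (n : ℕ) (hn : 1 ≤ n)
    (h : EuclideanSpace ℝ (Fin n) → ℝ)
    (hcont : Continuous h) (hint : Integrable h)
    (hequiv : ∀ f : EuclideanSpace ℝ (Fin n) → ℝ, Continuous f → HasCompactSupport f →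
      ∀ (Q : EuclideanSpace ℝ (Fin n) ≃ₗᵢ[ℝ] EuclideanSpace ℝ (Fin n))
        (x : EuclideanSpace ℝ (Fin n)),
        ∫ y, f (Q.symm y) * h (x - y) = ∫ y, f y * h (Q.symm x - y)) :
    ∀ (Q : EuclideanSpace ℝ (Fin n) ≃ₗᵢ[ℝ] EuclideanSpace ℝ (Fin n))
      (x : EuclideanSpace ℝ (Fin n)), h (Q x) = h x :=
  radial_of_convolution_rotation_equivariant_general n h hcont hequiv
end

section
/- Let n ≥ 1, let u : ℝⁿ → ℝ be integrable and compactly supported, let R : ℝ → ℝ be measurable and bounded, and define the vector kernel field h : ℝⁿ → ℝⁿ by h(x) = R(‖x‖) • ‖x‖⁻¹ • x for x ≠ 0 and h(0) = 0. Define the scalar-to-vector convolution operator L(u)(x) = ∫ u(y) • h(x − y) dy ∈ ℝⁿ. Then L is rotation equivariant: for every linear isometric equivalence Q of ℝⁿ and every x ∈ ℝⁿ, L(u ∘ Q⁻¹)(x) = Q (L(u)(Q⁻¹ x)). -/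
open scoped Classical

open MeasureTheory

/-! A rotation `Q` commutes with a radial vector field `x ↦ g ‖x‖ • x`, since it preserves norms
and is linear. Substituting `y = Q z` in the convolution integral (Lebesgue measure is
`Q`-invariant) turns `h (x - Q z)` into `Q (h (Q⁻¹ x - z))`, and `Q`, being a continuous linear
equivalence, commutes with the Bochner integral. -/

section Equivariance

variable {E F : Type*} [NormedAddCommGroup E] [NormedSpace ℝ E]
  [NormedAddCommGroup F] [NormedSpace ℝ F]

theorem LinearIsometryEquiv.map_radial_smul (g : ℝ → ℝ) (Q : E ≃ₗᵢ[ℝ] E) (x : E) :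
    g ‖Q x‖ • Q x = Q (g ‖x‖ • x) := by
  rw [Q.norm_map, Q.map_smul]

theorem LinearIsometryEquiv.map_radial_unit_smul (R : ℝ → ℝ) (Q : E ≃ₗᵢ[ℝ] E) (x : E) :
    R ‖Q x‖ • ‖Q x‖⁻¹ • Q x = Q (R ‖x‖ • ‖x‖⁻¹ • x) := by
  simp only [smul_smul]
  exact Q.map_radial_smul (fun r => R r * r⁻¹) x

theorem integral_smul_sub_comp_symm_of_equivariant [MeasurableSpace E] [BorelSpace E]
    {μ : Measure E} (Q : E ≃ₗᵢ[ℝ] E) (hQ : MeasurePreserving Q μ μ) (ρ : F ≃L[ℝ] F)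
    (k : E → F) (hk : ∀ v, k (Q v) = ρ (k v))
    (u : E → ℝ) (x : E) :
    ∫ y, u (Q.symm y) • k (x - y) ∂μ = ρ (∫ y, u y • k (Q.symm x - y) ∂μ) := by
  have hsub : ∀ z, x - Q z = Q (Q.symm x - z) := fun z => by
    rw [map_sub, Q.apply_symm_apply]
  calc ∫ y, u (Q.symm y) • k (x - y) ∂μ
      = ∫ z, u z • k (x - Q z) ∂μ := by
        rw [← hQ.integral_comp Q.toHomeomorph.measurableEmbedding]
        simp
    _ = ∫ z, ρ (u z • k (Q.symm x - z)) ∂μ := by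
        simp only [hsub, hk, map_smul]
    _ = ρ (∫ z, u z • k (Q.symm x - z) ∂μ) := ρ.integral_comp_comm _

end Equivariance

theorem scalar_vector_convolution_rotation_equivariant_general
    (n : ℕ)
    (u : EuclideanSpace ℝ (Fin n) → ℝ)
    (R : ℝ → ℝ)
    (h : EuclideanSpace ℝ (Fin n) → EuclideanSpace ℝ (Fin n))
    (hdef : ∀ x, h x = if x = 0 then 0 else R ‖x‖ • ‖x‖⁻¹ • x)
    (Q : EuclideanSpace ℝ (Fin n) ≃ₗᵢ[ℝ] EuclideanSpace ℝ (Fin n))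
    (x : EuclideanSpace ℝ (Fin n)) :
    ∫ y, u (Q.symm y) • h (x - y) = Q (∫ y, u y • h (Q.symm x - y)) := by
  have hradial : ∀ v, h v = R ‖v‖ • ‖v‖⁻¹ • v := fun v => by
    rw [hdef]
    split_ifs with hv <;> simp [hv]
  have hh : ∀ v, h (Q v) = Q (h v) := fun v => by
    rw [hradial, hradial, Q.map_radial_unit_smul]
  exact integral_smul_sub_comp_symm_of_equivariant Q Q.measurePreserving
    Q.toContinuousLinearEquiv h hh u x

/-- Rotation equivariance of the scalar-to-vector convolution with a radially symmetric
vector kernel `h(x) = R(‖x‖) • ‖x‖⁻¹ • x`: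
`L(u ∘ Q⁻¹)(x) = Q (L(u)(Q⁻¹ x))` for every linear isometric equivalence `Q`. -/
theorem scalar_vector_convolution_rotation_equivariant
    (n : ℕ) (hn : 1 ≤ n)
    (u : EuclideanSpace ℝ (Fin n) → ℝ)
    (hu : Integrable u) (husupp : HasCompactSupport u)
    (R : ℝ → ℝ) (hRmeas : Measurable R) (C : ℝ) (hRbdd : ∀ r, |R r| ≤ C)
    (h : EuclideanSpace ℝ (Fin n) → EuclideanSpace ℝ (Fin n))
    (hdef : ∀ x, h x = if x = 0 then 0 else R ‖x‖ • ‖x‖⁻¹ • x)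
    (Q : EuclideanSpace ℝ (Fin n) ≃ₗᵢ[ℝ] EuclideanSpace ℝ (Fin n))
    (x : EuclideanSpace ℝ (Fin n)) :
    ∫ y, u (Q.symm y) • h (x - y) = Q (∫ y, u y • h (Q.symm x - y)) :=
  scalar_vector_convolution_rotation_equivariant_general n u R h hdef Q x
end

section
/- Let n ≥ 1, let u : ℝⁿ → ℝⁿ be integrable and compactly supported, let R : ℝ → ℝ be measurable and bounded, and define the vector kernel field h : ℝⁿ → ℝⁿ by h(x) = R(‖x‖) • ‖x‖⁻¹ • x for x ≠ 0 and h(0) = 0. Define the dot-product convolution operator L(u)(x) = ∫ ⟪u(y), h(x − y)⟫ dy ∈ ℝ. Then L is rotation equivariant: for every linear isometric equivalence Q of ℝⁿ and every x ∈ ℝⁿ, L((Q ∘ u) ∘ Q⁻¹)(x) = L(u)(Q⁻¹ x). -/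
/-!
Substituting `y = Q z`, which preserves Lebesgue measure, turns `x - y` into `Q (Q⁻¹ x - z)`.
A radial vector kernel commutes with every linear isometry, so both arguments of the inner
product carry a factor `Q`, and `Q` preserves inner products.
-/

open scoped Classical InnerProductSpace Convolution
open MeasureTheory

section
variable {E : Type*} [NormedAddCommGroup E] [InnerProductSpace ℝ E]

theorem LinearIsometryEquiv.commute_of_radial [DecidableEq E] {h : E → E} {R : ℝ → ℝ}
    (hdef : ∀ x, h x = if x = 0 then 0 else R ‖x‖ • ‖x‖⁻¹ • x) (Q : E ≃ₗᵢ[ℝ] E) :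
    Function.Commute h Q := by
  intro v
  by_cases hv : v = 0 <;> simp [hdef, hv]

theorem LinearIsometryEquiv.convolution_innerSL_conj [MeasurableSpace E] [BorelSpace E]
    {μ : Measure E} (Q : E ≃ₗᵢ[ℝ] E) (hQ : MeasurePreserving Q μ μ) {u h : E → E}
    (hQh : Function.Commute h Q) (x : E) :
    ((Q ∘ u ∘ Q.symm) ⋆[innerSL ℝ, μ] h) x = (u ⋆[innerSL ℝ, μ] h) (Q.symm x) := by
  rw [convolution_def, ← hQ.integral_comp Q.toHomeomorph.measurableEmbedding]
  congr 1 with y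
  have hsub : x - Q y = Q (Q.symm x - y) := by rw [map_sub, Q.apply_symm_apply]
  simp only [Function.comp_apply, Q.symm_apply_apply, hsub, hQh.eq, innerSL_apply_apply ℝ,
    Q.inner_map_map]

end

theorem dot_convolution_rotation_equivariant_general
    (n : ℕ)
    (u : EuclideanSpace ℝ (Fin n) → EuclideanSpace ℝ (Fin n))
    (R : ℝ → ℝ)
    (h : EuclideanSpace ℝ (Fin n) → EuclideanSpace ℝ (Fin n))
    (hdef : ∀ x, h x = if x = 0 then 0 else R ‖x‖ • ‖x‖⁻¹ • x)
    (Q : EuclideanSpace ℝ (Fin n) ≃ₗᵢ[ℝ] EuclideanSpace ℝ (Fin n))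
    (x : EuclideanSpace ℝ (Fin n)) :
    (∫ y, ⟪Q (u (Q.symm y)), h (x - y)⟫_ℝ) = ∫ y, ⟪u y, h (Q.symm x - y)⟫_ℝ :=
  Q.convolution_innerSL_conj Q.measurePreserving (Q.commute_of_radial hdef) x

/-- Rotation equivariance of the vector-to-scalar (dot product) convolution with a
radially symmetric vector kernel `h(x) = R(‖x‖) • ‖x‖⁻¹ • x`:
`L((Q ∘ u) ∘ Q⁻¹)(x) = L(u)(Q⁻¹ x)` for every linear isometric equivalence `Q`. -/
theorem dot_convolution_rotation_equivariant
    (n : ℕ) (hn : 1 ≤ n)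
    (u : EuclideanSpace ℝ (Fin n) → EuclideanSpace ℝ (Fin n))
    (hu : Integrable u) (husupp : HasCompactSupport u)
    (R : ℝ → ℝ) (hRmeas : Measurable R) (C : ℝ) (hRbdd : ∀ r, |R r| ≤ C)
    (h : EuclideanSpace ℝ (Fin n) → EuclideanSpace ℝ (Fin n))
    (hdef : ∀ x, h x = if x = 0 then 0 else R ‖x‖ • ‖x‖⁻¹ • x)
    (Q : EuclideanSpace ℝ (Fin n) ≃ₗᵢ[ℝ] EuclideanSpace ℝ (Fin n))
    (x : EuclideanSpace ℝ (Fin n)) :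
    (∫ y, ⟪Q (u (Q.symm y)), h (x - y)⟫_ℝ) = ∫ y, ⟪u y, h (Q.symm x - y)⟫_ℝ :=
  dot_convolution_rotation_equivariant_general n u R h hdef Q x
end

section
/- Let u : ℝ³ → ℝ³ be integrable and compactly supported, let R : ℝ → ℝ be measurable and bounded, and define the vector kernel field h : ℝ³ → ℝ³ by h(x) = R(‖x‖) • ‖x‖⁻¹ • x for x ≠ 0 and h(0) = 0. Define the cross-product convolution operator L(u)(x) = ∫ u(y) × h(x − y) dy ∈ ℝ³. Then L is equivariant under proper rotations: for every Q in the special orthogonal group SO(3) and every x ∈ ℝ³, L((Q ∘ u) ∘ Q⁻¹)(x) = Q (L(u)(Q⁻¹ x)). -/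
/-!
A rotation `Q ∈ SO(3)` commutes with the cross product, since `⟪a × b, c⟫ = det [a, b, c]` and
`det [Q a, Q b, Q c] = det Q • det [a, b, c]`; it commutes with the radial kernel, since that kernel
only involves the norm and scalar multiples of its argument. Substituting `y = Q z`, which preserves
Lebesgue measure, the integrand of the left-hand side becomes `Q` applied to the integrand of the
right-hand side, and `Q` commutes with the integral.
-/

open scoped Classical
open MeasureTheory

noncomputable def cross3 (a b : EuclideanSpace ℝ (Fin 3)) : EuclideanSpace ℝ (Fin 3) :=
  (WithLp.equiv 2 (Fin 3 → ℝ)).symm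
    (crossProduct ((WithLp.equiv 2 (Fin 3 → ℝ)) a) ((WithLp.equiv 2 (Fin 3 → ℝ)) b))

lemma inner_cross3 (a b c : EuclideanSpace ℝ (Fin 3)) :
    inner ℝ (cross3 a b) c = (EuclideanSpace.basisFun (Fin 3) ℝ).toBasis.det ![a, b, c] := by
  have hrows : ((EuclideanSpace.basisFun (Fin 3) ℝ).toBasis.toMatrix ![a, b, c]).transpose =
      ![a.ofLp, b.ofLp, c.ofLp] := by
    ext i j
    fin_cases i <;> simp [Module.Basis.toMatrix_apply]
  rw [Module.Basis.det_apply, ← Matrix.det_transpose, hrows, ← triple_product_eq_det,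
    ← triple_product_permutation]
  simp [cross3, PiLp.inner_apply, dotProduct]

lemma cross3_map_of_det_eq_one (Q : EuclideanSpace ℝ (Fin 3) ≃ₗᵢ[ℝ] EuclideanSpace ℝ (Fin 3))
    (hQ : LinearMap.det
      (Q.toLinearEquiv : EuclideanSpace ℝ (Fin 3) →ₗ[ℝ] EuclideanSpace ℝ (Fin 3)) = 1)
    (a b : EuclideanSpace ℝ (Fin 3)) :
    cross3 (Q a) (Q b) = Q (cross3 a b) := by
  refine ext_inner_right ℝ fun c => ?_
  obtain ⟨d, rfl⟩ := Q.surjective c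
  have hcomp : ![Q a, Q b, Q d] =
      (Q.toLinearEquiv : EuclideanSpace ℝ (Fin 3) →ₗ[ℝ] EuclideanSpace ℝ (Fin 3)) ∘ ![a, b, d] := by
    ext i : 1
    fin_cases i <;> rfl
  rw [Q.inner_map_map, inner_cross3, inner_cross3, hcomp, Module.Basis.det_comp, hQ, one_mul]

section RadialKernel

variable {E F : Type*} [NormedAddCommGroup E] [NormedSpace ℝ E]
  [NormedAddCommGroup F] [NormedSpace ℝ F]

noncomputable def radialKernel (R : ℝ → ℝ) (x : E) : E :=
  if x = 0 then 0 else R ‖x‖ • ‖x‖⁻¹ • x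

lemma radialKernel_map (R : ℝ → ℝ) (Q : E ≃ₗᵢ[ℝ] F) (x : E) :
    radialKernel R (Q x) = Q (radialKernel R x) := by
  simp only [radialKernel, Q.map_eq_zero_iff, Q.norm_map]
  split_ifs <;> simp

end RadialKernel

lemma integral_conv_linearIsometryEquiv_conj {E : Type*} [NormedAddCommGroup E]
    [InnerProductSpace ℝ E] [FiniteDimensional ℝ E] [MeasurableSpace E] [BorelSpace E]
    (B : E → E → E) (u h : E → E) (Q : E ≃ₗᵢ[ℝ] E)
    (hB : ∀ a b, B (Q a) (Q b) = Q (B a b)) (hh : ∀ v, h (Q v) = Q (h v)) (x : E) :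
    ∫ y, B (Q (u (Q.symm y))) (h (x - y)) = Q (∫ y, B (u y) (h (Q.symm x - y))) := by
  have hintegrand : ∀ z, B (Q (u (Q.symm (Q z)))) (h (x - Q z)) =
      Q (B (u z) (h (Q.symm x - z))) := by
    intro z
    rw [Q.symm_apply_apply, ← Q.apply_symm_apply x, ← map_sub, hh, hB, Q.apply_symm_apply]
  rw [← Q.measurePreserving.integral_comp Q.toHomeomorph.measurableEmbedding]
  simp only [hintegrand]
  exact Q.toLinearIsometry.integral_comp_comm _

theorem cross_convolution_rotation_equivariant_general
    (u : EuclideanSpace ℝ (Fin 3) → EuclideanSpace ℝ (Fin 3))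
    (R : ℝ → ℝ)
    (h : EuclideanSpace ℝ (Fin 3) → EuclideanSpace ℝ (Fin 3))
    (hdef : ∀ x, h x = if x = 0 then 0 else R ‖x‖ • ‖x‖⁻¹ • x)
    (Q : EuclideanSpace ℝ (Fin 3) ≃ₗᵢ[ℝ] EuclideanSpace ℝ (Fin 3))
    (hdet : LinearMap.det (Q.toLinearEquiv : EuclideanSpace ℝ (Fin 3) →ₗ[ℝ] EuclideanSpace ℝ (Fin 3)) = 1)
    (x : EuclideanSpace ℝ (Fin 3)) :
    (∫ y, cross3 (Q (u (Q.symm y))) (h (x - y))) =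
      Q (∫ y, cross3 (u y) (h (Q.symm x - y))) := by
  -- `congr` reconciles the `Decidable (y = 0)` instances of `hdef` and of `radialKernel`.
  obtain rfl : h = radialKernel R := funext fun y => by rw [hdef, radialKernel]; congr
  exact integral_conv_linearIsometryEquiv_conj cross3 u _ Q (cross3_map_of_det_eq_one Q hdet)
    (radialKernel_map R Q) x

/-- Equivariance under proper rotations (orthogonal maps of determinant 1) of the
cross-product convolution with a radially symmetric vector kernel
`h(x) = R(‖x‖) • ‖x‖⁻¹ • x`: `L((Q ∘ u) ∘ Q⁻¹)(x) = Q (L(u)(Q⁻¹ x))`. -/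
theorem cross_convolution_rotation_equivariant
    (u : EuclideanSpace ℝ (Fin 3) → EuclideanSpace ℝ (Fin 3))
    (hu : Integrable u) (husupp : HasCompactSupport u)
    (R : ℝ → ℝ) (hRmeas : Measurable R) (C : ℝ) (hRbdd : ∀ r, |R r| ≤ C)
    (h : EuclideanSpace ℝ (Fin 3) → EuclideanSpace ℝ (Fin 3))
    (hdef : ∀ x, h x = if x = 0 then 0 else R ‖x‖ • ‖x‖⁻¹ • x)
    (Q : EuclideanSpace ℝ (Fin 3) ≃ₗᵢ[ℝ] EuclideanSpace ℝ (Fin 3))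
    (hdet : LinearMap.det (Q.toLinearEquiv : EuclideanSpace ℝ (Fin 3) →ₗ[ℝ] EuclideanSpace ℝ (Fin 3)) = 1)
    (x : EuclideanSpace ℝ (Fin 3)) :
    (∫ y, cross3 (Q (u (Q.symm y))) (h (x - y))) =
      Q (∫ y, cross3 (u y) (h (Q.symm x - y))) :=
  cross_convolution_rotation_equivariant_general u R h hdef Q hdet x
end

section
/- Let n ≥ 1 and let h : ℝⁿ → ℝⁿ be integrable and rotation equivariant: h(Q x) = Q (h(x)) for every linear isometric equivalence Q of ℝⁿ and every x. Then the component-wise Fourier transform 𝓕h : ℝⁿ → ℂⁿ, defined by (𝓕h)ⱼ(ξ) = ∫ exp(−2πi ⟪x, ξ⟫) hⱼ(x) dx, is also rotation equivariant: both the real part and the imaginary part of 𝓕h satisfy (Re 𝓕h)(Q ξ) = Q ((Re 𝓕h)(ξ)) and (Im 𝓕h)(Q ξ) = Q ((Im 𝓕h)(ξ)) for every linear isometric equivalence Q and every ξ. -/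
open scoped InnerProductSpace
open MeasureTheory

/-! Substituting `x ↦ Q x`, which preserves Lebesgue measure and inner products, gives
`∫ g ⟪x, Q ξ⟫ • h x = Q (∫ g ⟪x, ξ⟫ • h x)` for every scalar profile `g`. For any real-linear
`ℓ : ℂ → ℝ` (here `re` and `im`), the vector `(ℓ (𝓕h ξ)ⱼ)ⱼ` is such an integral, with
`g t = ℓ (exp (-2πit))`. -/

theorem LinearIsometryEquiv.integral_smul_inner_map_of_comm {E : Type*} [NormedAddCommGroup E]
    [InnerProductSpace ℝ E] [FiniteDimensional ℝ E] [MeasurableSpace E] [BorelSpace E]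
    (Q : E ≃ₗᵢ[ℝ] E) {h : E → E}
    (hQ : ∀ x, h (Q x) = Q (h x)) (g : ℝ → ℝ) (ξ : E) :
    ∫ x, g ⟪x, Q ξ⟫_ℝ • h x = Q (∫ x, g ⟪x, ξ⟫_ℝ • h x) := by
  calc ∫ x, g ⟪x, Q ξ⟫_ℝ • h x = ∫ x, g ⟪Q x, Q ξ⟫_ℝ • h (Q x) :=
        (Q.measurePreserving.integral_comp Q.toHomeomorph.measurableEmbedding _).symm
    _ = ∫ x, Q (g ⟪x, ξ⟫_ℝ • h x) := by simp only [Q.inner_map_map, hQ, map_smul]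
    _ = Q (∫ x, g ⟪x, ξ⟫_ℝ • h x) := Q.toLinearIsometry.integral_comp_comm _

theorem EuclideanSpace.toLp_map_integral_mul_ofReal {X ι : Type*} [MeasurableSpace X]
    {μ : Measure X} [Fintype ι] {h : X → EuclideanSpace ℝ ι} (hh : Integrable h μ)
    {w : X → ℂ} {C : ℝ} (hw : AEStronglyMeasurable w μ) (hwC : ∀ᵐ x ∂μ, ‖w x‖ ≤ C)
    (ℓ : ℂ →L[ℝ] ℝ) :
    WithLp.toLp 2 (fun j => ℓ (∫ x, w x * (h x j : ℂ) ∂μ)) = ∫ x, ℓ (w x) • h x ∂μ := by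
  ext j
  have hj : Integrable (fun x => h x j) μ := (EuclideanSpace.proj (𝕜 := ℝ) j).integrable_comp hh
  have hwh : Integrable (fun x => w x * (h x j : ℂ)) μ := hj.ofReal.bdd_mul hw hwC
  have hℓwh : Integrable (fun x => ℓ (w x) • h x) μ := by
    refine hh.bdd_smul (‖ℓ‖ * C) (ℓ.continuous.comp_aestronglyMeasurable hw) ?_
    filter_upwards [hwC] with x hx
    exact (ℓ.le_opNorm _).trans (by gcongr)
  calc ℓ (∫ x, w x * (h x j : ℂ) ∂μ) = ∫ x, ℓ (w x * (h x j : ℂ)) ∂μ :=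
        (ℓ.integral_comp_comm hwh).symm
    _ = ∫ x, (ℓ (w x) • h x) j ∂μ := by
        congr 1 with x
        rw [mul_comm, ← Complex.real_smul, map_smul, PiLp.smul_apply, smul_eq_mul, smul_eq_mul,
          mul_comm]
    _ = (∫ x, ℓ (w x) • h x ∂μ) j := (EuclideanSpace.proj (𝕜 := ℝ) j).integral_comp_comm hℓwh

theorem componentwise_fourier_rotation_equivariant_general
    (n : ℕ)
    (h : EuclideanSpace ℝ (Fin n) → EuclideanSpace ℝ (Fin n)) (hint : Integrable h)
    (hequiv : ∀ (Q : EuclideanSpace ℝ (Fin n) ≃ₗᵢ[ℝ] EuclideanSpace ℝ (Fin n))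
      (x : EuclideanSpace ℝ (Fin n)), h (Q x) = Q (h x))
    (F : EuclideanSpace ℝ (Fin n) → EuclideanSpace ℂ (Fin n))
    (hF : ∀ (ξ : EuclideanSpace ℝ (Fin n)) (j : Fin n),
      F ξ j = ∫ x, Complex.exp (-2 * Real.pi * Complex.I * (⟪x, ξ⟫_ℝ : ℂ)) * (h x j : ℂ))
    (Q : EuclideanSpace ℝ (Fin n) ≃ₗᵢ[ℝ] EuclideanSpace ℝ (Fin n))
    (ξ : EuclideanSpace ℝ (Fin n)) :
    ((WithLp.toLp 2 (fun j => (F (Q ξ) j).re) : EuclideanSpace ℝ (Fin n)) =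
        Q (WithLp.toLp 2 (fun j => (F ξ j).re) : EuclideanSpace ℝ (Fin n))) ∧
      ((WithLp.toLp 2 (fun j => (F (Q ξ) j).im) : EuclideanSpace ℝ (Fin n)) =
        Q (WithLp.toLp 2 (fun j => (F ξ j).im) : EuclideanSpace ℝ (Fin n))) := by
  have hF_integral : ∀ (ℓ : ℂ →L[ℝ] ℝ) (ζ : EuclideanSpace ℝ (Fin n)),
      WithLp.toLp 2 (fun j => ℓ (F ζ j)) =
        ∫ x, ℓ (Complex.exp (-2 * Real.pi * Complex.I * (⟪x, ζ⟫_ℝ : ℂ))) • h x := by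
    intro ℓ ζ
    simp only [hF]
    refine EuclideanSpace.toLp_map_integral_mul_ofReal hint (by fun_prop) (C := 1) ?_ ℓ
    filter_upwards with x
    rw [Complex.norm_exp]
    simp
  have hF_equiv : ∀ ℓ : ℂ →L[ℝ] ℝ,
      WithLp.toLp 2 (fun j => ℓ (F (Q ξ) j)) = Q (WithLp.toLp 2 (fun j => ℓ (F ξ j))) := by
    intro ℓ
    rw [hF_integral, hF_integral]
    exact Q.integral_smul_inner_map_of_comm (hequiv Q)
      (fun t => ℓ (Complex.exp (-2 * Real.pi * Complex.I * (t : ℂ)))) ξ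
  exact ⟨hF_equiv Complex.reCLM, hF_equiv Complex.imCLM⟩

/-- The component-wise Fourier transform of an integrable rotation equivariant vector
field `h : ℝⁿ → ℝⁿ` is rotation equivariant: both the real and the imaginary parts of
`𝓕h` satisfy `(Re 𝓕h)(Q ξ) = Q ((Re 𝓕h)(ξ))` and `(Im 𝓕h)(Q ξ) = Q ((Im 𝓕h)(ξ))`. -/
theorem componentwise_fourier_rotation_equivariant
    (n : ℕ) (hn : 1 ≤ n)
    (h : EuclideanSpace ℝ (Fin n) → EuclideanSpace ℝ (Fin n)) (hint : Integrable h)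
    (hequiv : ∀ (Q : EuclideanSpace ℝ (Fin n) ≃ₗᵢ[ℝ] EuclideanSpace ℝ (Fin n))
      (x : EuclideanSpace ℝ (Fin n)), h (Q x) = Q (h x))
    (F : EuclideanSpace ℝ (Fin n) → EuclideanSpace ℂ (Fin n))
    (hF : ∀ (ξ : EuclideanSpace ℝ (Fin n)) (j : Fin n),
      F ξ j = ∫ x, Complex.exp (-2 * Real.pi * Complex.I * (⟪x, ξ⟫_ℝ : ℂ)) * (h x j : ℂ))
    (Q : EuclideanSpace ℝ (Fin n) ≃ₗᵢ[ℝ] EuclideanSpace ℝ (Fin n))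
    (ξ : EuclideanSpace ℝ (Fin n)) :
    ((WithLp.toLp 2 (fun j => (F (Q ξ) j).re) : EuclideanSpace ℝ (Fin n)) =
        Q (WithLp.toLp 2 (fun j => (F ξ j).re) : EuclideanSpace ℝ (Fin n))) ∧
      ((WithLp.toLp 2 (fun j => (F (Q ξ) j).im) : EuclideanSpace ℝ (Fin n)) =
        Q (WithLp.toLp 2 (fun j => (F ξ j).im) : EuclideanSpace ℝ (Fin n))) :=
  componentwise_fourier_rotation_equivariant_general n h hint hequiv F hF Q ξ
end

section
/- Let n ≥ 2 and let h : ℝⁿ → ℝⁿ satisfy h(Q x) = Q (h(x)) for every orthogonal linear isometric equivalence Q of ℝⁿ and every x. Then there exists a scalar radial function R : ℝ → ℝ such that for every x ≠ 0, h(x) = R(‖x‖) • ‖x‖⁻¹ • x; moreover h(0) = 0. -/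
/-!
Equivariance under the reflection in the line `ℝ ∙ x`, which fixes `x`, forces `h x` to lie on that
line; for `x = 0` the line is `⊥`, so `h 0 = 0`. Hence `h x = (⟪h x, x⟫ / ‖x‖²) • x`, and the scalar
`⟪h x, x⟫` is invariant under all linear isometries. Any two vectors of the same norm are exchanged
by a reflection, so this scalar depends on `‖x‖` only.
-/

open Function RealInnerProductSpace

section

variable {E : Type*} [NormedAddCommGroup E] [InnerProductSpace ℝ E]

theorem apply_eq_apply_of_norm_eq_of_linearIsometryEquiv_invariant {α : Type*} {f : E → α}
    (hf : ∀ (Q : E ≃ₗᵢ[ℝ] E) (x : E), f (Q x) = f x) {x y : E} (hxy : ‖x‖ = ‖y‖) :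
    f x = f y := by
  rw [← hf (Submodule.reflection (ℝ ∙ (x - y))ᗮ) x, Submodule.reflection_sub hxy]

theorem exists_eq_comp_norm_of_linearIsometryEquiv_invariant {α : Type*} {f : E → α}
    (hf : ∀ (Q : E ≃ₗᵢ[ℝ] E) (x : E), f (Q x) = f x) : ∃ g : ℝ → α, ∀ x, f x = g ‖x‖ :=
  ⟨extend norm f fun _ => f 0, fun x => (FactorsThrough.extend_apply (f := norm) (g := f)
    (fun _ _ hxy => apply_eq_apply_of_norm_eq_of_linearIsometryEquiv_invariant hf hxy) _ x).symm⟩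

theorem mem_span_singleton_of_linearIsometryEquiv_equivariant {h : E → E}
    (hequiv : ∀ (Q : E ≃ₗᵢ[ℝ] E) (x : E), h (Q x) = Q (h x)) (x : E) : h x ∈ ℝ ∙ x := by
  have hfix := hequiv (Submodule.reflection (ℝ ∙ x)) x
  rw [Submodule.reflection_mem_subspace_eq_self (Submodule.mem_span_singleton_self x)] at hfix
  exact (Submodule.reflection_eq_self_iff _).mp hfix.symm

theorem eq_inner_div_norm_sq_smul_of_linearIsometryEquiv_equivariant {h : E → E}
    (hequiv : ∀ (Q : E ≃ₗᵢ[ℝ] E) (x : E), h (Q x) = Q (h x)) (x : E) :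
    h x = (⟪h x, x⟫ / ‖x‖ ^ 2) • x := by
  have hproj := Submodule.starProjection_singleton ℝ (v := x) (h x)
  rw [Submodule.starProjection_eq_self_iff.mpr
    (mem_span_singleton_of_linearIsometryEquiv_equivariant hequiv x)] at hproj
  simpa [real_inner_comm] using hproj
end

theorem equivariant_vector_field_is_radial_general
    (n : ℕ)
    (h : EuclideanSpace ℝ (Fin n) → EuclideanSpace ℝ (Fin n))
    (hequiv : ∀ (Q : EuclideanSpace ℝ (Fin n) ≃ₗᵢ[ℝ] EuclideanSpace ℝ (Fin n))
      (x : EuclideanSpace ℝ (Fin n)), h (Q x) = Q (h x)) :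
    (∃ R : ℝ → ℝ, ∀ x : EuclideanSpace ℝ (Fin n), x ≠ 0 → h x = R ‖x‖ • ‖x‖⁻¹ • x) ∧
      h 0 = 0 := by
  obtain ⟨g, hg⟩ := exists_eq_comp_norm_of_linearIsometryEquiv_invariant
    (f := fun x => ⟪h x, x⟫) fun Q x => by simp only [hequiv, LinearIsometryEquiv.inner_map_map]
  refine ⟨⟨fun t => g t / t, fun x hx => ?_⟩, ?_⟩
  · have hx' : ‖x‖ ≠ 0 := norm_ne_zero_iff.mpr hx
    rw [eq_inner_div_norm_sq_smul_of_linearIsometryEquiv_equivariant hequiv x, hg, smul_smul]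
    congr 1
    field_simp
  · simpa [Submodule.span_zero_singleton] using
      mem_span_singleton_of_linearIsometryEquiv_equivariant hequiv 0

/-- Structure of rotation equivariant vector fields on `ℝⁿ`, `n ≥ 2`: if
`h (Q x) = Q (h x)` for every linear isometric equivalence `Q`, then `h` is radially
symmetric, i.e. `h x = R(‖x‖) • ‖x‖⁻¹ • x` for some radial function `R`, and `h 0 = 0`. -/
theorem equivariant_vector_field_is_radial
    (n : ℕ) (hn : 2 ≤ n)
    (h : EuclideanSpace ℝ (Fin n) → EuclideanSpace ℝ (Fin n))
    (hequiv : ∀ (Q : EuclideanSpace ℝ (Fin n) ≃ₗᵢ[ℝ] EuclideanSpace ℝ (Fin n))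
      (x : EuclideanSpace ℝ (Fin n)), h (Q x) = Q (h x)) :
    (∃ R : ℝ → ℝ, ∀ x : EuclideanSpace ℝ (Fin n), x ≠ 0 → h x = R ‖x‖ • ‖x‖⁻¹ • x) ∧
      h 0 = 0 :=
  equivariant_vector_field_is_radial_general n h hequiv
end

section
/- Let n ≥ 1 and let h : ℝⁿ → ℝ be bounded measurable and radially symmetric, i.e. h(Q x) = h(x) for every linear isometric equivalence Q of ℝⁿ. Then the operator L(u) = u ⋆ h on integrable scalar fields u : ℝⁿ → ℝ is a linear equivariant operator: (1) L(a • u + b • v) = a • L(u) + b • L(v) pointwise for all integrable u, v and scalars a, b; (2) L commutes with all translations: L(u(· − a))(x) = L(u)(x − a); and (3) L commutes with all rotations: L(u ∘ Q⁻¹)(x) = L(u)(Q⁻¹ x) for every linear isometric equivalence Q. -/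
/-!
Boundedness of `h` makes `u ⋆ h` exist pointwise for integrable `u`, so linearity is that of the
integral. Translation invariance is the substitution `y ↦ y + a` under the translation-invariant
Lebesgue measure; rotation equivariance is the substitution `y ↦ Q y`, which preserves Lebesgue
measure and, since `x - Q y = Q (Q⁻¹ x - y)`, leaves the radial kernel unchanged.
-/

open MeasureTheory ContinuousLinearMap
open scoped Convolution

namespace MeasureTheory

variable {𝕜 G E E' F : Type*} [NontriviallyNormedField 𝕜]
  [NormedAddCommGroup E] [NormedAddCommGroup E'] [NormedAddCommGroup F]
  [NormedSpace 𝕜 E] [NormedSpace 𝕜 E'] [NormedSpace 𝕜 F]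
  {L : E →L[𝕜] E' →L[𝕜] F} {f f' : G → E} {g : G → E'}

theorem Integrable.convolutionExistsAt_mul_of_bdd [AddGroup G] [MeasurableSpace G]
    [MeasurableSub G] {μ : Measure G} {u k : G → ℝ} (hu : Integrable u μ) (hk : Measurable k)
    {C : ℝ} (hkC : ∀ y, |k y| ≤ C) (x : G) :
    ConvolutionExistsAt u k x (mul ℝ ℝ) μ :=
  hu.mul_bdd (hk.comp (measurable_const_sub x)).aestronglyMeasurable
    (.of_forall fun _ => hkC _)

theorem ConvolutionExistsAt.smul [AddGroup G] [MeasurableSpace G] {μ : Measure G} {x : G}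
    (hf : ConvolutionExistsAt f g x L μ) (c : 𝕜) :
    ConvolutionExistsAt (c • f) g x L μ := by
  simpa only [ConvolutionExistsAt, Pi.smul_apply, L.map_smul₂, Pi.smul_def] using
    Integrable.smul c hf

variable [NormedSpace ℝ F]

theorem ConvolutionExistsAt.smul_add_smul [SMulCommClass ℝ 𝕜 F] [AddGroup G] [MeasurableSpace G]
    {μ : Measure G} {x : G} (hf : ConvolutionExistsAt f g x L μ)
    (hf' : ConvolutionExistsAt f' g x L μ) (a b : 𝕜) :
    ((a • f + b • f') ⋆[L, μ] g) x = a • (f ⋆[L, μ] g) x + b • (f' ⋆[L, μ] g) x := by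
  rw [(hf.smul a).add_distrib (hf'.smul b), smul_convolution, smul_convolution]
  rfl

theorem convolution_comp_sub_right_apply [AddCommGroup G] [MeasurableSpace G] [MeasurableAdd G]
    (μ : Measure G) [μ.IsAddRightInvariant] (a x : G) :
    ((fun y => f (y - a)) ⋆[L, μ] g) x = (f ⋆[L, μ] g) (x - a) := by
  simp only [convolution_def]
  rw [← integral_add_right_eq_self _ a]
  simp only [add_sub_cancel_right, sub_sub, add_comm a]

theorem convolution_comp_linearIsometryEquiv_symm_apply [NormedAddCommGroup G]
    [InnerProductSpace ℝ G] [FiniteDimensional ℝ G] [MeasurableSpace G] [BorelSpace G]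
    (Q : G ≃ₗᵢ[ℝ] G) (hg : ∀ y, g (Q y) = g y) (x : G) :
    ((fun y => f (Q.symm y)) ⋆[L] g) x = (f ⋆[L] g) (Q.symm x) := by
  simp only [convolution_def]
  rw [← Q.measurePreserving.integral_comp Q.toMeasurableEquiv.measurableEmbedding
    (fun t => L (f (Q.symm t)) (g (x - t)))]
  congr 1 with y
  rw [Q.symm_apply_apply, ← hg (Q.symm x - y), map_sub, Q.apply_symm_apply]

end MeasureTheory

theorem convolution_is_linear_equivariant_operator_general
    (n : ℕ)
    (h : EuclideanSpace ℝ (Fin n) → ℝ)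
    (hmeas : Measurable h) (C : ℝ) (hbdd : ∀ x, |h x| ≤ C)
    (hrad : ∀ (Q : EuclideanSpace ℝ (Fin n) ≃ₗᵢ[ℝ] EuclideanSpace ℝ (Fin n))
      (x : EuclideanSpace ℝ (Fin n)), h (Q x) = h x) :
    -- (1) linearity
    (∀ u v : EuclideanSpace ℝ (Fin n) → ℝ, Integrable u → Integrable v → ∀ a b : ℝ,
      ∀ x : EuclideanSpace ℝ (Fin n),
        (∫ y, (a * u y + b * v y) * h (x - y)) =
          a * (∫ y, u y * h (x - y)) + b * ∫ y, v y * h (x - y)) ∧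
    -- (2) translation invariance
    (∀ u : EuclideanSpace ℝ (Fin n) → ℝ, Integrable u →
      ∀ a x : EuclideanSpace ℝ (Fin n),
        (∫ y, u (y - a) * h (x - y)) = ∫ y, u y * h ((x - a) - y)) ∧
    -- (3) rotation equivariance
    (∀ u : EuclideanSpace ℝ (Fin n) → ℝ, Integrable u →
      ∀ (Q : EuclideanSpace ℝ (Fin n) ≃ₗᵢ[ℝ] EuclideanSpace ℝ (Fin n))
        (x : EuclideanSpace ℝ (Fin n)),
        (∫ y, u (Q.symm y) * h (x - y)) = ∫ y, u y * h (Q.symm x - y)) := by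
  have hexists : ∀ u, Integrable u → ∀ x, ConvolutionExistsAt u h x (mul ℝ ℝ) volume :=
    fun u hu => hu.convolutionExistsAt_mul_of_bdd hmeas hbdd
  refine ⟨fun u v hu hv a b x => ?_, fun u _ a x => ?_, fun u _ Q x => ?_⟩
  · simpa only [convolution_mul, Pi.add_apply, Pi.smul_apply, smul_eq_mul] using
      (hexists u hu x).smul_add_smul (hexists v hv x) a b
  · simpa only [convolution_mul] using
      convolution_comp_sub_right_apply (L := mul ℝ ℝ) (f := u) (g := h) volume a x
  · simpa only [convolution_mul] using
      convolution_comp_linearIsometryEquiv_symm_apply (L := mul ℝ ℝ) (f := u) Q (hrad Q) x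

/-- Convolution with a bounded measurable radially symmetric scalar kernel `h` on `ℝⁿ`
is a linear equivariant operator on integrable scalar fields: it is (1) linear,
(2) translation invariant, and (3) rotation equivariant. -/
theorem convolution_is_linear_equivariant_operator
    (n : ℕ) (hn : 1 ≤ n)
    (h : EuclideanSpace ℝ (Fin n) → ℝ)
    (hmeas : Measurable h) (C : ℝ) (hbdd : ∀ x, |h x| ≤ C)
    (hrad : ∀ (Q : EuclideanSpace ℝ (Fin n) ≃ₗᵢ[ℝ] EuclideanSpace ℝ (Fin n))
      (x : EuclideanSpace ℝ (Fin n)), h (Q x) = h x) :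
    -- (1) linearity
    (∀ u v : EuclideanSpace ℝ (Fin n) → ℝ, Integrable u → Integrable v → ∀ a b : ℝ,
      ∀ x : EuclideanSpace ℝ (Fin n),
        (∫ y, (a * u y + b * v y) * h (x - y)) =
          a * (∫ y, u y * h (x - y)) + b * ∫ y, v y * h (x - y)) ∧
    -- (2) translation invariance
    (∀ u : EuclideanSpace ℝ (Fin n) → ℝ, Integrable u →
      ∀ a x : EuclideanSpace ℝ (Fin n),
        (∫ y, u (y - a) * h (x - y)) = ∫ y, u y * h ((x - a) - y)) ∧
    -- (3) rotation equivariance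
    (∀ u : EuclideanSpace ℝ (Fin n) → ℝ, Integrable u →
      ∀ (Q : EuclideanSpace ℝ (Fin n) ≃ₗᵢ[ℝ] EuclideanSpace ℝ (Fin n))
        (x : EuclideanSpace ℝ (Fin n)),
        (∫ y, u (Q.symm y) * h (x - y)) = ∫ y, u y * h (Q.symm x - y)) :=
  convolution_is_linear_equivariant_operator_general n h hmeas C hbdd hrad
end
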